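/- arXiv:1709.03137 — 2 statements merged into one kernel-verified Lean document; each statement's English description precedes it below -/
import Mathlib

section
/- Let d ≥ 1. There exists a constant α > 0 depending only on d such that for all convex bodies G_1, G_2 ⊆ ℝ^d contained in the closed unit ball B(0,1): |G_1 △ G_2| ≤ α·d_H(G_1, G_2). -/
open MeasureTheory Metric Set
open scoped symmDiff

noncomputable section

abbrev Euc (d : ℕ) := EuclideanSpace ℝ (Fin d)

/-- A convex body: a compact convex set with nonempty interior. -/
def IsConvexBody {d : ℕ} (G : Set (Euc d)) : Prop :=
  IsCompact G ∧ Convex ℝ G ∧ (interior G).Nonempty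

section NikodymAuxSection

open scoped ENNReal NNReal RealInnerProductSpace

namespace NikodymAux

/-- Dimensional constant: volume growth factor of a `1`-Lipschitz image. -/
def lipC (d : ℕ) : ℝ≥0∞ := ((((d : ℝ≥0) ^ ((1 : ℝ)/2)) : ℝ≥0) : ℝ≥0∞) ^ (d : ℝ)

lemma one_le_lipC {d : ℕ} (hd : 1 ≤ d) : 1 ≤ lipC d := by
  have h1 : (1 : ℝ≥0) ≤ (d : ℝ≥0) ^ ((1 : ℝ)/2) :=
    NNReal.one_le_rpow (by exact_mod_cast hd) (by norm_num)
  rcases Nat.eq_zero_or_pos d with h | h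
  · simp [lipC, h]
  · exact ENNReal.one_le_rpow (by exact_mod_cast h1) (by positivity)

lemma lipC_ne_top {d : ℕ} : lipC d ≠ ⊤ :=
  ENNReal.rpow_ne_top_of_nonneg (by positivity) ENNReal.coe_ne_top

/-- Volume bound for images of `1`-Lipschitz maps on Euclidean space. -/
lemma volume_image_le {d : ℕ} {s : Set (Euc d)} {f : Euc d → Euc d}
    (hf : LipschitzOnWith 1 f s) : volume (f '' s) ≤ lipC d * volume s := by
  classical
  set e := (MeasurableEquiv.toLp 2 (Fin d → ℝ)).symm with he
  have hvol : ∀ A : Set (Euc d), volume ((⇑(WithLp.equiv 2 (Fin d → ℝ))) '' A) = volume A := by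
    intro A
    have h1 : (⇑(WithLp.equiv 2 (Fin d → ℝ))) '' A = e.symm ⁻¹' A := by
      ext x; simp [he]
      exact ⟨fun ⟨y, hy, hyx⟩ => hyx ▸ hy, fun h => ⟨_, h, rfl⟩⟩
    rw [h1]
    exact ((EuclideanSpace.volume_preserving_symm_measurableEquiv_toLp (Fin d)).symm e).measure_preimage_equiv A
  -- the conjugated map on the sup-metric pi space
  set κ : ℝ≥0 := (Fintype.card (Fin d) : ℝ≥0) ^ ((1 : ℝ≥0∞)/2).toReal with hκ
  have hsymm : LipschitzWith κ (⇑(WithLp.equiv 2 (Fin d → ℝ)).symm) :=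
    PiLp.lipschitzWith_toLp 2 (fun _ : Fin d => ℝ)
  have hmaps : MapsTo (⇑(WithLp.equiv 2 (Fin d → ℝ)).symm)
      ((⇑(WithLp.equiv 2 (Fin d → ℝ))) '' s) s := by
    rintro x ⟨y, hy, rfl⟩
    simpa using hy
  have hcomp : LipschitzOnWith (1 * (1 * κ))
      ((⇑(WithLp.equiv 2 (Fin d → ℝ))) ∘ f ∘ (⇑(WithLp.equiv 2 (Fin d → ℝ)).symm))
      ((⇑(WithLp.equiv 2 (Fin d → ℝ))) '' s) :=
    (PiLp.lipschitzWith_ofLp 2 (fun _ : Fin d => ℝ)).comp_lipschitzOnWith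
      (hf.comp hsymm.lipschitzOnWith hmaps)
  have hμH := hcomp.hausdorffMeasure_image_le (show (0:ℝ) ≤ (d:ℝ) by positivity)
  have hpi : (μH[(d : ℝ)] : Measure (Fin d → ℝ)) = volume := by
    have := hausdorffMeasure_pi_real (ι := Fin d)
    simpa [Fintype.card_fin] using this
  have himg : ((⇑(WithLp.equiv 2 (Fin d → ℝ))) ∘ f ∘ (⇑(WithLp.equiv 2 (Fin d → ℝ)).symm)) ''
      ((⇑(WithLp.equiv 2 (Fin d → ℝ))) '' s) = (⇑(WithLp.equiv 2 (Fin d → ℝ))) '' (f '' s) := by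
    rw [Set.image_image, Set.image_image]
    simp
  rw [hpi, himg] at hμH
  rw [← hvol (f '' s), ← hvol s]
  refine hμH.trans_eq ?_
  congr 1
  rw [lipC]
  norm_num [hκ, ENNReal.toReal_div]


variable {d : ℕ} {K : Set (Euc d)}

/-- Existence of the metric projection with its variational characterization. -/
lemma exists_proj (hc : IsCompact K) (hv : Convex ℝ K) (hne : K.Nonempty) (x : Euc d) :
    ∃ p, p ∈ K ∧ ‖x - p‖ = infDist x K ∧ ∀ q ∈ K, ⟪x - p, q - p⟫ ≤ 0 := by
  obtain ⟨v, hvK, hvmin⟩ := exists_norm_eq_iInf_of_complete_convex hne hc.isComplete hv x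
  refine ⟨v, hvK, ?_, (norm_eq_iInf_iff_real_inner_le_zero hv hvK).1 hvmin⟩
  rw [hvmin, infDist_eq_iInf]
  simp_rw [dist_eq_norm]

lemma proj_unique (hv : Convex ℝ K) {x p q : Euc d} (hp : p ∈ K) (hq : q ∈ K)
    (h1 : ∀ r ∈ K, ⟪x - p, r - p⟫ ≤ 0) (h2 : ∀ r ∈ K, ⟪x - q, r - q⟫ ≤ 0) : p = q := by
  have a1 : ⟪x - p, q - p⟫ ≤ 0 := h1 q hq
  have a2 : ⟪x - q, p - q⟫ ≤ 0 := h2 p hp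
  have key : ‖q - p‖ ^ 2 ≤ 0 := by
    have h3 : ⟪x - p, q - p⟫ - ⟪x - q, q - p⟫ = ‖q - p‖ ^ 2 := by
      rw [← inner_sub_left]
      have : (x - p) - (x - q) = q - p := by abel
      rw [this, real_inner_self_eq_norm_sq]
    have h4 : 0 ≤ ⟪x - q, q - p⟫ := by
      have : ⟪x - q, q - p⟫ = -⟪x - q, p - q⟫ := by
        rw [show q - p = -(p - q) by abel, inner_neg_right]
      linarith [this ▸ neg_nonneg.2 a2]
    linarith
  have : ‖q - p‖ = 0 := by nlinarith [norm_nonneg (q - p)]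
  have : q - p = 0 := norm_eq_zero.1 this
  linear_combination (norm := module) -this

set_option maxHeartbeats 2000000 in
/-- Key geometric lemma: the volume of the annulus `{0 < dist ≤ ε}` around a convex compact set
is at most `lipC d` times that of the annulus `{δ < dist ≤ δ + ε}`. -/
lemma annulus_le (hc : IsCompact K) (hv : Convex ℝ K) (hne : K.Nonempty) (hd : 1 ≤ d)
    {δ ε : ℝ} (hδ : 0 ≤ δ) :
    volume {x : Euc d | 0 < infDist x K ∧ infDist x K ≤ ε} ≤
      lipC d * volume {x : Euc d | δ < infDist x K ∧ infDist x K ≤ δ + ε} := by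
  set D : Euc d → ℝ := fun x => infDist x K with hD
  rcases hδ.eq_or_lt with rfl | hδpos
  · simp only [zero_add]
    calc volume {x : Euc d | 0 < D x ∧ D x ≤ ε}
        = 1 * volume {x : Euc d | 0 < D x ∧ D x ≤ ε} := (one_mul _).symm
      _ ≤ lipC d * volume {x : Euc d | 0 < D x ∧ D x ≤ ε} :=
          mul_le_mul_left (one_le_lipC hd) _
  choose p hpK hpnorm hpvar using fun x => exists_proj hc hv hne x
  set g : Euc d → Euc d := fun y => y - (δ / D y) • (y - p y) with hg
  set T : Set (Euc d) := {x | 0 < D x ∧ D x ≤ ε} with hT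
  set S : Set (Euc d) := {x | δ < D x ∧ D x ≤ δ + ε} with hS
  have hTsub : T ⊆ g '' S := by
    rintro x ⟨hx0, hxε⟩
    have hDx : 0 < D x := hx0
    set c : ℝ := δ / D x with hcdef
    have hc0 : 0 < c := div_pos hδpos hDx
    set y : Euc d := x + c • (x - p x) with hy
    have hyp : y - p x = (1 + c) • (x - p x) := by
      rw [hy, add_smul, one_smul]; abel
    have hne1 : D x ≠ 0 := hDx.ne'
    have hcD : c * D x = δ := div_mul_cancel₀ δ hne1
    have hpn : ‖x - p x‖ = D x := hpnorm x
    have hnormy : ‖y - p x‖ = D x + δ := by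
      rw [hyp, norm_smul, Real.norm_eq_abs, abs_of_pos (by linarith), hpn]
      linear_combination hcD
    have hDy_le : D y ≤ D x + δ := by
      have := infDist_le_dist_of_mem (s := K) (x := y) (hpK x)
      rwa [dist_eq_norm, hnormy] at this
    have hDy_ge : ∀ q ∈ K, D x + δ ≤ dist y q := by
      intro q hq
      have hCS : ⟪y - q, x - p x⟫ ≤ ‖y - q‖ * ‖x - p x‖ := real_inner_le_norm _ _
      have hsplit : y - q = (1 + c) • (x - p x) + (p x - q) := by
        rw [show y - q = (y - p x) + (p x - q) by abel, hyp]
      have hexp : ⟪y - q, x - p x⟫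
          = (1 + c) * ⟪x - p x, x - p x⟫ + ⟪p x - q, x - p x⟫ := by
        rw [hsplit, inner_add_left, real_inner_smul_left]
      have h1 : ⟪x - p x, x - p x⟫ = D x * D x := by
        rw [real_inner_self_eq_norm_mul_norm, hpn]
      have h2 : 0 ≤ ⟪p x - q, x - p x⟫ := by
        have hvq : ⟪x - p x, q - p x⟫ ≤ 0 := hpvar x q hq
        have heq : ⟪p x - q, x - p x⟫ = -⟪x - p x, q - p x⟫ := by
          rw [real_inner_comm, show p x - q = -(q - p x) by abel, inner_neg_right]
        rw [heq]; linarith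
      have hdist : dist y q = ‖y - q‖ := dist_eq_norm y q
      have mδ : c * (D x * D x) = δ * D x := by
        calc c * (D x * D x) = (c * D x) * D x := by ring
          _ = δ * D x := by rw [hcD]
      nlinarith [norm_nonneg (y - q), hCS, hexp, h1, h2, hpn, hdist, hDx, mδ]
    have hDy : D y = D x + δ := by
      refine le_antisymm hDy_le ?_
      obtain ⟨q, hq, hqe⟩ := hc.exists_infDist_eq_dist hne y
      have hqe' : D y = dist y q := hqe
      exact (hDy_ge q hq).trans_eq hqe'.symm
    have hpy : p y = p x := by
      refine proj_unique hv (hpK y) (hpK x) (hpvar y) ?_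
      intro q hq
      have : y - p x = (1 + c) • (x - p x) := hyp
      rw [this, real_inner_smul_left]
      exact mul_nonpos_of_nonneg_of_nonpos (by linarith) (hpvar x q hq)
    have hgy : g y = x := by
      have hco : δ / (D x + δ) * (1 + c) = c := by
        rw [div_mul_eq_mul_div, div_eq_iff (by linarith : D x + δ ≠ 0), hcdef,
          div_mul_eq_mul_div, eq_div_iff hne1]
        linear_combination (D x + δ) * hcD - D x * hcD
      show y - (δ / D y) • (y - p y) = x
      rw [hDy, hpy, hyp, smul_smul, hco, hy, add_sub_cancel_right]
    refine ⟨y, ⟨?_, ?_⟩, hgy⟩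
    · rw [hDy]; linarith
    · rw [hDy]; linarith
  have hLip : LipschitzOnWith 1 g S := by
    rw [lipschitzOnWith_iff_dist_le_mul]
    intro y₁ h₁ y₂ h₂
    rw [NNReal.coe_one, one_mul]
    obtain ⟨hd₁, hd₁'⟩ := h₁
    obtain ⟨hd₂, hd₂'⟩ := h₂
    set d₁ := D y₁ with hdd₁
    set d₂ := D y₂ with hdd₂
    set v₁ : Euc d := y₁ - p y₁ with hv₁
    set v₂ : Euc d := y₂ - p y₂ with hv₂
    set c₁ : ℝ := δ / d₁ with hc₁def
    set c₂ : ℝ := δ / d₂ with hc₂def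
    have hd₁0 : 0 < d₁ := lt_of_le_of_lt hδ hd₁
    have hd₂0 : 0 < d₂ := lt_of_le_of_lt hδ hd₂
    have hc₁0 : 0 < c₁ := div_pos hδpos hd₁0
    have hc₂0 : 0 < c₂ := div_pos hδpos hd₂0
    have hc₁1 : c₁ ≤ 1 := by rw [hc₁def, div_le_one hd₁0]; exact hd₁.le
    have hc₂1 : c₂ ≤ 1 := by rw [hc₂def, div_le_one hd₂0]; exact hd₂.le
    have hc₁d : c₁ * d₁ = δ := div_mul_cancel₀ δ hd₁0.ne'
    have hc₂d : c₂ * d₂ = δ := div_mul_cancel₀ δ hd₂0.ne'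
    have hn₁ : ‖v₁‖ = d₁ := hpnorm y₁
    have hn₂ : ‖v₂‖ = d₂ := hpnorm y₂
    have hg₁ : g y₁ = y₁ - c₁ • v₁ := rfl
    have hg₂ : g y₂ = y₂ - c₂ • v₂ := rfl
    set w : Euc d := c₁ • v₁ - c₂ • v₂ with hw
    have hgdiff : g y₁ - g y₂ = (y₁ - y₂) - w := by
      rw [hg₁, hg₂, hw]; abel
    have hsplit : y₁ - y₂ = (p y₁ - p y₂) + (v₁ - v₂) := by
      rw [hv₁, hv₂]; abel
    set s : ℝ := ⟪v₁, v₂⟫ with hsdef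
    have hs : s ≤ d₁ * d₂ := by
      rw [hsdef, ← hn₁, ← hn₂]; exact real_inner_le_norm _ _
    set P : ℝ := ⟪p y₁ - p y₂, v₁⟫ with hPdef
    set R : ℝ := ⟪p y₁ - p y₂, v₂⟫ with hRdef
    have hP : 0 ≤ P := by
      have h : ⟪v₁, p y₂ - p y₁⟫ ≤ 0 := hpvar y₁ (p y₂) (hpK y₂)
      have heq : P = -⟪v₁, p y₂ - p y₁⟫ := by
        rw [hPdef, real_inner_comm, show p y₁ - p y₂ = -(p y₂ - p y₁) by abel,
          inner_neg_right]
      rw [heq]; linarith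
    have hR : R ≤ 0 := by
      have h : ⟪v₂, p y₁ - p y₂⟫ ≤ 0 := hpvar y₂ (p y₁) (hpK y₁)
      have heq : R = ⟪v₂, p y₁ - p y₂⟫ := by rw [hRdef, real_inner_comm]
      rw [heq]; linarith
    have e1 : ⟪y₁ - y₂, w⟫ = c₁ * ⟪y₁ - y₂, v₁⟫ - c₂ * ⟪y₁ - y₂, v₂⟫ := by
      rw [hw, inner_sub_right, real_inner_smul_right, real_inner_smul_right]
    have ein1 : ⟪v₁ - v₂, v₁⟫ = d₁ * d₁ - s := by
      rw [inner_sub_left, real_inner_self_eq_norm_mul_norm, hn₁,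
        real_inner_comm v₁ v₂, ← hsdef]
    have ein2 : ⟪v₁ - v₂, v₂⟫ = s - d₂ * d₂ := by
      rw [inner_sub_left, real_inner_self_eq_norm_mul_norm, hn₂, ← hsdef]
    have e2 : ⟪y₁ - y₂, v₁⟫ = P + (d₁ * d₁ - s) := by
      rw [hsplit, inner_add_left, ein1, ← hPdef]
    have e3 : ⟪y₁ - y₂, v₂⟫ = R + (s - d₂ * d₂) := by
      rw [hsplit, inner_add_left, ein2, ← hRdef]
    have e4 : ‖w‖ ^ 2 = c₁ * c₁ * (d₁ * d₁) - 2 * (c₁ * c₂) * s + c₂ * c₂ * (d₂ * d₂) := by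
      rw [hw, norm_sub_sq_real, norm_smul, norm_smul, real_inner_smul_left,
        real_inner_smul_right, Real.norm_eq_abs, Real.norm_eq_abs,
        abs_of_pos hc₁0, abs_of_pos hc₂0, hn₁, hn₂, ← hsdef]
      ring
    have hiw : ⟪y₁ - y₂, w⟫ = c₁ * P - c₂ * R
        + (c₁ * (d₁ * d₁) - c₁ * s - c₂ * s + c₂ * (d₂ * d₂)) := by
      rw [e1, e2, e3]; ring
    have key : ‖(y₁ - y₂) - w‖ ^ 2 ≤ ‖y₁ - y₂‖ ^ 2 := by
      rw [norm_sub_sq_real, hiw, e4]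
      have hcoef : 0 ≤ c₁ + c₂ - c₁ * c₂ := by
        nlinarith [mul_nonneg hc₁0.le (sub_nonneg.2 hc₂1)]
      have hmain : 0 ≤ (d₁ * d₂ - s) * (c₁ + c₂ - c₁ * c₂) :=
        mul_nonneg (by linarith) hcoef
      have hmain2 : 0 ≤ δ * d₁ + δ * d₂ - δ * δ - c₁ * s - c₂ * s + c₁ * c₂ * s := by
        have expand : (d₁ * d₂ - s) * (c₁ + c₂ - c₁ * c₂)
            = (c₁ * d₁) * d₂ + (c₂ * d₂) * d₁ - (c₁ * d₁) * ((c₂ * d₂))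
              - c₁ * s - c₂ * s + c₁ * c₂ * s := by ring
        rw [expand, hc₁d, hc₂d] at hmain
        linarith
      have m5 : (c₁ * c₂) * (d₁ * d₂) = δ * δ := by
        calc (c₁ * c₂) * (d₁ * d₂) = (c₁ * d₁) * (c₂ * d₂) := by ring
          _ = δ * δ := by rw [hc₁d, hc₂d]
      have m6 : c₁ * (d₁ * d₂) = δ * d₂ := by
        calc c₁ * (d₁ * d₂) = (c₁ * d₁) * d₂ := by ring
          _ = δ * d₂ := by rw [hc₁d]
      have m7 : c₂ * (d₁ * d₂) = δ * d₁ := by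
        calc c₂ * (d₁ * d₂) = (c₂ * d₂) * d₁ := by ring
          _ = δ * d₁ := by rw [hc₂d]
      have m1 : c₁ * (d₁ * d₁) = δ * d₁ := by
        calc c₁ * (d₁ * d₁) = (c₁ * d₁) * d₁ := by ring
          _ = δ * d₁ := by rw [hc₁d]
      have m2 : c₂ * (d₂ * d₂) = δ * d₂ := by
        calc c₂ * (d₂ * d₂) = (c₂ * d₂) * d₂ := by ring
          _ = δ * d₂ := by rw [hc₂d]
      have m3 : (c₁ * c₁) * (d₁ * d₁) = δ * δ := by
        calc (c₁ * c₁) * (d₁ * d₁) = (c₁ * d₁) * (c₁ * d₁) := by ring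
          _ = δ * δ := by rw [hc₁d]
      have m4 : (c₂ * c₂) * (d₂ * d₂) = δ * δ := by
        calc (c₂ * c₂) * (d₂ * d₂) = (c₂ * d₂) * (c₂ * d₂) := by ring
          _ = δ * δ := by rw [hc₂d]
      have hPc : 0 ≤ c₁ * P := mul_nonneg hc₁0.le hP
      have hRc : c₂ * R ≤ 0 := mul_nonpos_of_nonneg_of_nonpos hc₂0.le hR
      linarith [hmain2, hPc, hRc, m1, m2, m3, m4]
    rw [dist_eq_norm, dist_eq_norm, hgdiff]
    have h0A := norm_nonneg ((y₁ - y₂) - w)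
    have h0B := norm_nonneg (y₁ - y₂)
    nlinarith [key]
  calc volume T ≤ volume (g '' S) := measure_mono hTsub
    _ ≤ lipC d * volume S := volume_image_le hLip


/-- Volume of the shell of width `ε` around a convex compact subset of the unit ball. -/
lemma shell_le (hc : IsCompact K) (hv : Convex ℝ K) (hne : K.Nonempty) (hd : 1 ≤ d)
    (hK1 : K ⊆ closedBall (0 : Euc d) 1) {ε : ℝ} (hε : 0 < ε) (hε2 : ε ≤ 1/2) :
    volume {x : Euc d | 0 < infDist x K ∧ infDist x K ≤ ε} ≤
      ENNReal.ofReal (2 * ε) * (lipC d * volume (closedBall (0 : Euc d) 3)) := by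
  set T := {x : Euc d | 0 < infDist x K ∧ infDist x K ≤ ε} with hT
  set A : ℕ → Set (Euc d) :=
    fun j => {x : Euc d | (j : ℝ) * ε < infDist x K ∧ infDist x K ≤ (j : ℝ) * ε + ε} with hA
  set N := ⌊1/ε⌋₊ with hN
  have hcont : Continuous fun x : Euc d => infDist x K := continuous_infDist_pt K
  have hmeas : ∀ j : ℕ, MeasurableSet (A j) := fun j =>
    ((isOpen_lt continuous_const hcont).measurableSet).inter
      ((isClosed_le hcont continuous_const).measurableSet)
  have hann : ∀ j : ℕ, volume T ≤ lipC d * volume (A j) :=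
    fun j => annulus_le hc hv hne hd (by positivity)
  have hNε : (N : ℝ) * ε ≤ 1 := by
    have h := Nat.floor_le (show (0:ℝ) ≤ 1/ε by positivity)
    rw [hN]
    calc (⌊1/ε⌋₊ : ℝ) * ε ≤ (1/ε) * ε := by nlinarith
      _ = 1 := by field_simp
  have hsub : ∀ j : ℕ, j < N → A j ⊆ closedBall (0 : Euc d) 3 := by
    intro j hj x hx
    obtain ⟨q, hq, hqe⟩ := hc.exists_infDist_eq_dist hne x
    have hj1 : ((j : ℝ) + 1) ≤ N := by exact_mod_cast hj
    have h1 : infDist x K ≤ 1 := by nlinarith [hx.2, hε.le]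
    have h2 : dist x q ≤ 1 := by rw [← hqe]; exact h1
    have h3 : dist q 0 ≤ 1 := mem_closedBall.1 (hK1 hq)
    have : dist x 0 ≤ 3 := by
      calc dist x 0 ≤ dist x q + dist q 0 := dist_triangle _ _ _
        _ ≤ 3 := by linarith
    exact mem_closedBall.2 this
  have hdisj : (↑(Finset.range N) : Set ℕ).PairwiseDisjoint A := by
    intro i _ j _ hij
    apply Set.disjoint_left.2
    intro x hxi hxj
    rcases lt_or_gt_of_ne hij with h | h
    · have h' : ((i : ℝ) + 1) ≤ j := by exact_mod_cast h
      have := hxi.2; have := hxj.1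
      nlinarith [hε.le]
    · have h' : ((j : ℝ) + 1) ≤ i := by exact_mod_cast h
      have := hxj.2; have := hxi.1
      nlinarith [hε.le]
  have hsum : (N : ℝ≥0∞) * volume T ≤ lipC d * volume (closedBall (0 : Euc d) 3) := by
    calc (N : ℝ≥0∞) * volume T = ∑ _j ∈ Finset.range N, volume T := by
          simp [Finset.sum_const, nsmul_eq_mul]
      _ ≤ ∑ j ∈ Finset.range N, lipC d * volume (A j) :=
          Finset.sum_le_sum fun j _ => hann j
      _ = lipC d * ∑ j ∈ Finset.range N, volume (A j) := by rw [Finset.mul_sum]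
      _ = lipC d * volume (⋃ j ∈ Finset.range N, A j) := by
          rw [measure_biUnion_finset hdisj (fun j _ => hmeas j)]
      _ ≤ lipC d * volume (closedBall (0 : Euc d) 3) := by
          apply mul_le_mul_right
          apply measure_mono
          exact Set.iUnion₂_subset fun j hj => hsub j (Finset.mem_range.1 hj)
  have hNlow : 1 ≤ 2 * ε * (N : ℝ) := by
    have h5 : 1/ε - 1 < (N : ℝ) := by
      rw [hN]; exact Nat.sub_one_lt_floor (1/ε)
    have h6 : ε * (1/ε) = 1 := by field_simp
    nlinarith [mul_lt_mul_of_pos_left h5 (show (0:ℝ) < 2*ε by positivity), h6, hε2, hε]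
  have h7 : (1 : ℝ≥0∞) ≤ ENNReal.ofReal (2 * ε) * (N : ℝ≥0∞) := by
    rw [← ENNReal.ofReal_natCast N, ← ENNReal.ofReal_mul (by positivity),
      ← ENNReal.ofReal_one]
    exact ENNReal.ofReal_le_ofReal hNlow
  calc volume T = 1 * volume T := (one_mul _).symm
    _ ≤ ENNReal.ofReal (2 * ε) * (N : ℝ≥0∞) * volume T := mul_le_mul_left h7 _
    _ = ENNReal.ofReal (2 * ε) * ((N : ℝ≥0∞) * volume T) := mul_assoc _ _ _
    _ ≤ ENNReal.ofReal (2 * ε) * (lipC d * volume (closedBall (0 : Euc d) 3)) :=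
        mul_le_mul_right hsum _

end NikodymAux

end NikodymAuxSection

open NikodymAux in
/-- On convex bodies contained in the unit ball, the Nikodym distance is dominated by the
Hausdorff distance, up to a dimensional constant. -/
theorem nikodym_le_hausdorff (d : ℕ) (hd : 1 ≤ d) :
    ∃ α : ℝ, 0 < α ∧
      ∀ G₁ G₂ : Set (Euc d), IsConvexBody G₁ → IsConvexBody G₂ →
        G₁ ⊆ closedBall (0 : Euc d) 1 → G₂ ⊆ closedBall (0 : Euc d) 1 →
        (volume (G₁ ∆ G₂)).toReal ≤ α * hausdorffDist G₁ G₂ := by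
  set V3 : ENNReal := lipC d * volume (closedBall (0 : Euc d) 3) with hV3
  have hV3top : V3 ≠ ⊤ :=
    ENNReal.mul_ne_top lipC_ne_top measure_closedBall_lt_top.ne
  have hV3pos : 0 < V3 := by
    apply ENNReal.mul_pos
    · exact (lt_of_lt_of_le zero_lt_one (one_le_lipC hd)).ne'
    · exact (measure_closedBall_pos volume (0 : Euc d) (by norm_num)).ne'
  have hV3r : 0 < V3.toReal := ENNReal.toReal_pos hV3pos.ne' hV3top
  refine ⟨4 * V3.toReal, by positivity, ?_⟩
  intro G₁ G₂ hG₁ hG₂ hB₁ hB₂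
  obtain ⟨hc₁, hv₁, hi₁⟩ := hG₁
  obtain ⟨hc₂, hv₂, hi₂⟩ := hG₂
  obtain ⟨z₁, hz₁⟩ := hi₁
  obtain ⟨z₂, hz₂⟩ := hi₂
  have hne₁ : G₁.Nonempty := ⟨z₁, interior_subset hz₁⟩
  have hne₂ : G₂.Nonempty := ⟨z₂, interior_subset hz₂⟩
  set ε := hausdorffDist G₁ G₂ with hε
  have hεnn : 0 ≤ ε := hausdorffDist_nonneg
  have hfin : EMetric.hausdorffEdist G₁ G₂ ≠ ⊤ :=
    hausdorffEdist_ne_top_of_nonempty_of_bounded hne₁ hne₂ hc₁.isBounded hc₂.isBounded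
  have hfin' : EMetric.hausdorffEdist G₂ G₁ ≠ ⊤ := by rwa [EMetric.hausdorffEdist, Metric.hausdorffEDist_comm] at hfin
  rcases eq_or_lt_of_le hεnn with h0 | hεpos
  · have heq : G₁ = G₂ := (hc₁.isClosed.hausdorffDist_zero_iff_eq hc₂.isClosed hfin).1 h0.symm
    rw [heq, symmDiff_self, ← h0]
    simp [bot_eq_empty]
  have hsd : volume (G₁ ∆ G₂) ≤ volume (G₁ \ G₂) + volume (G₂ \ G₁) := by
    rw [Set.symmDiff_def]
    exact measure_union_le _ _
  by_cases hhalf : ε ≤ 1/2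
  · have hsub₁ : G₁ \ G₂ ⊆ {x : Euc d | 0 < infDist x G₂ ∧ infDist x G₂ ≤ ε} := by
      rintro x ⟨hx1, hx2⟩
      exact ⟨(hc₂.isClosed.notMem_iff_infDist_pos hne₂).1 hx2,
        infDist_le_hausdorffDist_of_mem hx1 hfin⟩
    have hsub₂ : G₂ \ G₁ ⊆ {x : Euc d | 0 < infDist x G₁ ∧ infDist x G₁ ≤ ε} := by
      rintro x ⟨hx1, hx2⟩
      refine ⟨(hc₁.isClosed.notMem_iff_infDist_pos hne₁).1 hx2, ?_⟩
      have := infDist_le_hausdorffDist_of_mem hx1 hfin'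
      rwa [hausdorffDist_comm] at this
    have h₁ := (measure_mono hsub₁).trans (shell_le hc₂ hv₂ hne₂ hd hB₂ hεpos hhalf)
    have h₂ := (measure_mono hsub₂).trans (shell_le hc₁ hv₁ hne₁ hd hB₁ hεpos hhalf)
    have htot : volume (G₁ ∆ G₂) ≤ ENNReal.ofReal (4 * ε) * V3 := by
      calc volume (G₁ ∆ G₂) ≤ _ + _ := hsd
        _ ≤ ENNReal.ofReal (2 * ε) * V3 + ENNReal.ofReal (2 * ε) * V3 := add_le_add h₁ h₂
        _ = ENNReal.ofReal (4 * ε) * V3 := by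
            rw [← add_mul, ← ENNReal.ofReal_add (by positivity) (by positivity),
              show 2 * ε + 2 * ε = 4 * ε by ring]
    have hmono := ENNReal.toReal_mono (ENNReal.mul_ne_top ENNReal.ofReal_ne_top hV3top) htot
    rw [ENNReal.toReal_mul, ENNReal.toReal_ofReal (by positivity)] at hmono
    calc (volume (G₁ ∆ G₂)).toReal ≤ 4 * ε * V3.toReal := hmono
      _ = 4 * V3.toReal * ε := by ring
  · push_neg at hhalf
    have hV1V3 : volume (closedBall (0 : Euc d) 1) ≤ V3 := by
      calc volume (closedBall (0 : Euc d) 1)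
          ≤ volume (closedBall (0 : Euc d) 3) :=
            measure_mono (closedBall_subset_closedBall (by norm_num))
        _ = 1 * volume (closedBall (0 : Euc d) 3) := (one_mul _).symm
        _ ≤ V3 := mul_le_mul_left (one_le_lipC hd) _
    have h1 : volume (G₁ ∆ G₂) ≤ V3 + V3 := by
      refine hsd.trans (add_le_add ?_ ?_)
      · exact (measure_mono (Set.diff_subset.trans hB₁)).trans hV1V3
      · exact (measure_mono (Set.diff_subset.trans hB₂)).trans hV1V3
    have h2 : (volume (G₁ ∆ G₂)).toReal ≤ 2 * V3.toReal := by
      have hmono := ENNReal.toReal_mono (by finiteness) h1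
      rw [ENNReal.toReal_add hV3top hV3top] at hmono
      linarith
    nlinarith [h2, hV3r]
end
end

section
/- Let M be a positive integer and let U_1, …, U_M be i.i.d. random vectors uniformly distributed on the unit sphere S^{d-1}. Let ε ∈ (0,1) and let 𝒞 be the event that {U_1, …, U_M} is an ε-net of S^{d-1}. Then P[𝒞] ≥ 1 − 6^d · exp( −M·ε^{d-1}/(2d·8^{(d-1)/2}) + d·ln(1/ε) ). -/
open MeasureTheory Metric Set
open scoped ENNReal

noncomputable section

open Real
open scoped RealInnerProductSpace Pointwise

namespace RandomNetAux

def kap (k : ℕ) : ℝ := Real.sqrt π ^ k / Real.Gamma ((k : ℝ) / 2 + 1)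

lemma gamma_arg_pos (k : ℕ) : 0 < (k : ℝ) / 2 + 1 := by positivity

lemma kap_pos (k : ℕ) : 0 < kap k := by
  have := Real.Gamma_pos_of_pos (gamma_arg_pos k)
  have hπ : 0 < Real.sqrt π := Real.sqrt_pos.mpr Real.pi_pos
  exact div_pos (pow_pos hπ k) this

lemma volume_ball_euc (k : ℕ) (hk : 1 ≤ k) (x : Euc k) (r : ℝ) :
    volume (ball x r) = (ENNReal.ofReal r) ^ k * ENNReal.ofReal (kap k) := by
  have : Nonempty (Fin k) := Fin.pos_iff_nonempty.mp hk
  simpa [kap] using EuclideanSpace.volume_ball (Fin k) x r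

lemma volume_closedBall_euc (k : ℕ) (hk : 1 ≤ k) (x : Euc k) (r : ℝ) :
    volume (closedBall x r) = (ENNReal.ofReal r) ^ k * ENNReal.ofReal (kap k) := by
  have : Nonempty (Fin k) := Fin.pos_iff_nonempty.mp hk
  simpa [kap] using EuclideanSpace.volume_closedBall (Fin k) x r

lemma sqrt_pi_le_two : Real.sqrt π ≤ 2 := by
  have h4 : Real.sqrt 4 = 2 := by
    rw [show (4 : ℝ) = 2 ^ 2 by norm_num, Real.sqrt_sq (by norm_num : (0:ℝ) ≤ 2)]
  calc Real.sqrt π ≤ Real.sqrt 4 := Real.sqrt_le_sqrt Real.pi_le_four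
    _ = 2 := h4

lemma kap_succ_le (n : ℕ) (hn : 1 ≤ n) : kap (n + 1) ≤ Real.sqrt π * kap n := by
  have hmono : Real.Gamma ((n : ℝ) / 2 + 1) ≤ Real.Gamma (((n : ℝ) + 1) / 2 + 1) := by
    rcases eq_or_lt_of_le hn with h1 | h2
    · -- n = 1
      rw [← h1]
      have hg32 : Real.Gamma ((1 : ℝ) / 2 + 1) = Real.sqrt π / 2 := by
        rw [Real.Gamma_add_one (by norm_num), Real.Gamma_one_half_eq]; ring
      have e1 : ((1:ℕ):ℝ)/2 + 1 = (1:ℝ)/2 + 1 := by norm_num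
      have e2 : (((1:ℕ):ℝ)+1)/2 + 1 = 2 := by norm_num
      rw [e1, e2, hg32, Real.Gamma_two]
      nlinarith [sqrt_pi_le_two, Real.sqrt_nonneg π]
    · -- n ≥ 2
      have hn2 : (2 : ℝ) ≤ (n : ℝ) := by exact_mod_cast h2
      have h1 : ((n : ℝ) / 2 + 1) ∈ Ici (2 : ℝ) := by simp; linarith
      have h2' : (((n : ℝ) + 1) / 2 + 1) ∈ Ici (2 : ℝ) := by simp; linarith
      exact (Real.Gamma_strictMonoOn_Ici.monotoneOn h1 h2' (by linarith))
  have hΓpos := Real.Gamma_pos_of_pos (gamma_arg_pos n)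
  have hΓpos' : 0 < Real.Gamma (((n:ℝ)+1) / 2 + 1) := by
    apply Real.Gamma_pos_of_pos; positivity
  have hπ : 0 < Real.sqrt π := Real.sqrt_pos.mpr Real.pi_pos
  have : kap (n+1) = Real.sqrt π ^ (n+1) / Real.Gamma (((n:ℝ)+1) / 2 + 1) := by
    unfold kap; norm_cast
  rw [this, kap, pow_succ, mul_comm (Real.sqrt π ^ n) (Real.sqrt π), mul_div_assoc]
  apply mul_le_mul_of_nonneg_left _ hπ.le
  exact div_le_div_of_nonneg_left (pow_nonneg hπ.le n) hΓpos hmono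

lemma sep_card_le (d : ℕ) (hd : 1 ≤ d) {ε : ℝ} (hε0 : 0 < ε) (hε1 : ε < 1)
    (S : Finset (Euc d)) (hS : ↑S ⊆ sphere (0 : Euc d) 1)
    (hsep : (S : Set (Euc d)).Pairwise fun a b => ε / 2 < dist a b) :
    (S.card : ℝ) ≤ (6 / ε) ^ d := by
  have hdisj : (S : Set (Euc d)).PairwiseDisjoint (fun a => ball a (ε / 4)) := by
    intro a ha b hb hab
    exact ball_disjoint_ball (by linarith [hsep ha hb hab])
  have hsum : ∑ a ∈ S, volume (ball a (ε / 4)) ≤ volume (ball (0 : Euc d) (1 + ε / 4)) := by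
    rw [← measure_biUnion_finset hdisj (fun a _ => measurableSet_ball)]
    apply measure_mono
    intro x hx
    simp only [mem_iUnion] at hx
    obtain ⟨a, ha, hxa⟩ := hx
    have h1 : dist a 0 = 1 := by simpa [mem_sphere] using hS ha
    have : dist x 0 < 1 + ε / 4 := by
      calc dist x 0 ≤ dist x a + dist a 0 := dist_triangle x a 0
        _ < ε / 4 + 1 := by rw [h1]; exact add_lt_add_left (mem_ball.mp hxa) 1
        _ = 1 + ε / 4 := by ring
    exact mem_ball.mpr this
  simp only [volume_ball_euc d hd] at hsum
  rw [Finset.sum_const] at hsum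
  have hreal : (S.card : ℝ) * ((ε/4)^d * kap d) ≤ (1 + ε/4)^d * kap d := by
    have h1 : (S.card : ℝ≥0∞) * ENNReal.ofReal ((ε/4)^d * kap d) ≤
        ENNReal.ofReal ((1 + ε/4)^d * kap d) := by
      calc (S.card : ℝ≥0∞) * ENNReal.ofReal ((ε/4)^d * kap d)
          = S.card • ((ENNReal.ofReal (ε/4))^d * ENNReal.ofReal (kap d)) := by
            rw [nsmul_eq_mul, ← ENNReal.ofReal_pow (by positivity), ← ENNReal.ofReal_mul (by positivity)]
        _ ≤ (ENNReal.ofReal (1 + ε/4))^d * ENNReal.ofReal (kap d) := hsum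
        _ = ENNReal.ofReal ((1 + ε/4)^d * kap d) := by
            rw [← ENNReal.ofReal_pow (by positivity), ← ENNReal.ofReal_mul (by positivity)]
    rw [← ENNReal.ofReal_natCast S.card, ← ENNReal.ofReal_mul (by positivity)] at h1
    exact (ENNReal.ofReal_le_ofReal_iff
      (mul_nonneg (by positivity) (kap_pos d).le)).mp h1
  have hkap := kap_pos d
  have h2 : (S.card : ℝ) * (ε/4)^d ≤ (1 + ε/4)^d := by
    have := mul_le_mul_of_nonneg_right hreal (le_of_lt (inv_pos.mpr hkap))
    calc (S.card : ℝ) * (ε/4)^d = (S.card : ℝ) * ((ε/4)^d * kap d) * (kap d)⁻¹ := by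
          field_simp
      _ ≤ (1 + ε/4)^d * kap d * (kap d)⁻¹ := this
      _ = (1 + ε/4)^d := by field_simp
  have h3 : (S.card : ℝ) ≤ ((1 + ε/4) / (ε/4))^d := by
    rw [div_pow, le_div_iff₀ (by positivity)]
    exact h2
  refine h3.trans (pow_le_pow_left₀ (by positivity) ?_ d)
  rw [div_le_div_iff₀ (by positivity) hε0]
  nlinarith

lemma exists_net (d : ℕ) (hd : 1 ≤ d) {ε : ℝ} (hε0 : 0 < ε) (hε1 : ε < 1) :
    ∃ S : Finset (Euc d), ↑S ⊆ sphere (0 : Euc d) 1 ∧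
      (∀ u ∈ sphere (0 : Euc d) 1, ∃ y ∈ S, dist u y ≤ ε / 2) ∧
      (S.card : ℝ) ≤ (6 / ε) ^ d := by
  classical
  set P : ℕ → Prop := fun m => ∃ S : Finset (Euc d), ↑S ⊆ sphere (0 : Euc d) 1 ∧
    ((S : Set (Euc d)).Pairwise fun a b => ε / 2 < dist a b) ∧ S.card = m with hP
  set B : ℕ := ⌈(6 / ε) ^ d⌉₊ with hB
  have hbound : ∀ m, P m → m ≤ B := by
    rintro m ⟨S, hS, hsep, rfl⟩
    have h := (sep_card_le d hd hε0 hε1 S hS hsep).trans (Nat.le_ceil _)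
    exact_mod_cast h
  set k := Nat.findGreatest P B with hk
  have hPk : P k := Nat.findGreatest_spec (Nat.zero_le B) ⟨∅, by simp⟩
  have hnot : ¬ P (k + 1) := fun hk1 =>
    Nat.findGreatest_is_greatest (Nat.lt_succ_self k) (hbound _ hk1) hk1
  obtain ⟨S, hS, hsep, hcard⟩ := hPk
  refine ⟨S, hS, ?_, sep_card_le d hd hε0 hε1 S hS hsep⟩
  intro u hu
  by_contra hcon
  push_neg at hcon
  have hu' : u ∉ S := fun hus => by
    have := hcon u hus
    simp only [dist_self] at this
    linarith
  apply hnot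
  refine ⟨insert u S, ?_, ?_, by rw [Finset.card_insert_of_notMem hu', hcard]⟩
  · rw [Finset.coe_insert]
    exact Set.insert_subset hu hS
  · rw [Finset.coe_insert]
    refine (letI : Std.Symm (fun a b : Euc d => ε / 2 < dist a b) := ⟨?_⟩; Set.pairwise_insert_of_symm).mpr ⟨hsep, fun b hb _ => hcon b hb⟩
    intro a b hab
    rwa [dist_comm]

lemma sqrt_cond_iff {s t a ρ : ℝ} (hs0 : 0 < s) (ht : 0 < t) (ha : 0 ≤ a) (hρ : 0 ≤ ρ)
    (hρs : ρ^2 = 1 - s^2) : s * Real.sqrt (t^2 + a^2) ≤ t ↔ a ≤ ρ/s*t := by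
  have hX : (0:ℝ) ≤ t^2 + a^2 := by positivity
  have hsq : Real.sqrt (t^2+a^2) ^ 2 = t^2 + a^2 := Real.sq_sqrt hX
  constructor
  · intro h
    have hnn : 0 ≤ s * Real.sqrt (t^2+a^2) := by positivity
    have h2 : s^2 * (t^2 + a^2) ≤ t^2 := by nlinarith [mul_le_mul h h hnn ht.le]
    have h3 : a^2 ≤ (ρ/s*t)^2 := by
      rw [div_mul_eq_mul_div, div_pow, le_div_iff₀ (by positivity)]
      nlinarith
    calc a = Real.sqrt (a^2) := (Real.sqrt_sq ha).symm
      _ ≤ Real.sqrt ((ρ/s*t)^2) := Real.sqrt_le_sqrt h3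
      _ = ρ/s*t := Real.sqrt_sq (by positivity)
  · intro h
    have h3 : a^2 ≤ (ρ/s*t)^2 := pow_le_pow_left₀ ha h 2
    have h4 : s^2*(ρ/s*t)^2 = ρ^2*t^2 := by field_simp
    have h2 : s^2 * (t^2+a^2) ≤ t^2 := by
      nlinarith [mul_le_mul_of_nonneg_left h3 (sq_nonneg s)]
    calc s * Real.sqrt (t^2+a^2) = Real.sqrt (s^2 * (t^2+a^2)) := by
          rw [Real.sqrt_mul (sq_nonneg s), Real.sqrt_sq hs0.le]
      _ ≤ Real.sqrt (t^2) := Real.sqrt_le_sqrt h2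
      _ = t := Real.sqrt_sq ht.le

lemma norm_insertNth (n : ℕ) (t : ℝ) (w : Fin n → ℝ) :
    ‖(MeasurableEquiv.toLp 2 (Fin (n+1) → ℝ)) (Fin.insertNth (α := fun _ => ℝ) 0 t w)‖
      = Real.sqrt (t^2 + ‖(MeasurableEquiv.toLp 2 (Fin n → ℝ)) w‖^2) := by
  have happ : ∀ i, ((MeasurableEquiv.toLp 2 (Fin (n+1) → ℝ))
      (Fin.insertNth (α := fun _ => ℝ) 0 t w)) i = Fin.insertNth (α := fun _ => ℝ) 0 t w i :=
    fun _ => rfl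
  have happ' : ∀ i, ((MeasurableEquiv.toLp 2 (Fin n → ℝ)) w) i = w i := fun _ => rfl
  have h0 : Fin.insertNth (α := fun _ => ℝ) 0 t w 0 = t := by simp
  have hsucc : ∀ i : Fin n, Fin.insertNth (α := fun _ => ℝ) 0 t w i.succ = w i := by
    intro i
    have h : (0 : Fin (n+1)).succAbove i = i.succ := by rw [Fin.succAbove_zero]
    rw [← h]; exact Fin.insertNth_apply_succAbove (α := fun _ => ℝ) 0 t w i
  rw [EuclideanSpace.norm_eq]
  congr 1
  rw [Fin.sum_univ_succ]
  simp only [happ, happ', h0, hsucc]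
  have hw2 : ‖(MeasurableEquiv.toLp 2 (Fin n → ℝ)) w‖^2 = ∑ i, ‖w i‖^2 := by
    rw [EuclideanSpace.norm_eq, Real.sq_sqrt (by positivity)]
    simp only [happ']
  rw [hw2]
  simp [Real.norm_eq_abs, sq_abs]

lemma cone_volume (n : ℕ) (hn : 1 ≤ n) {s : ℝ} (hs0 : 0 < s) (hs1 : s ≤ 1)
    {y : Euc (n+1)} (hy : ‖y‖ = 1) :
    volume {x : Euc (n+1) | ⟪y, x⟫ ∈ Ioo 0 s ∧ s * ‖x‖ ≤ ⟪y, x⟫} =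
      ENNReal.ofReal ((Real.sqrt (1-s^2)/s)^n * kap n * (s^(n+1)/(n+1))) := by
  set ρ := Real.sqrt (1 - s^2) with hρdef
  have hρ0 : 0 ≤ ρ := Real.sqrt_nonneg _
  have hρs : ρ^2 = 1 - s^2 := Real.sq_sqrt (by nlinarith)
  set e₀ : Euc (n+1) := EuclideanSpace.single 0 1 with he₀def
  have he₀ : ‖e₀‖ = 1 := by rw [he₀def, EuclideanSpace.norm_single]; norm_num
  set f := Submodule.reflection (ℝ ∙ (e₀ - y))ᗮ with hfdef
  have hfe : f e₀ = y := Submodule.reflection_sub (by rw [he₀, hy])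
  set ConeE : Set (Euc (n+1)) := {x | ⟪e₀, x⟫ ∈ Ioo 0 s ∧ s * ‖x‖ ≤ ⟪e₀, x⟫} with hConeE
  have hcontE : Continuous fun x : Euc (n+1) => ⟪e₀, x⟫ := continuous_const.inner continuous_id
  have hmeasE : MeasurableSet ConeE := by
    refine MeasurableSet.inter ?_ ?_
    · exact hcontE.measurable measurableSet_Ioo
    · exact measurableSet_le (continuous_const.mul continuous_norm).measurable
        hcontE.measurable
  have hset : {x : Euc (n+1) | ⟪y, x⟫ ∈ Ioo 0 s ∧ s * ‖x‖ ≤ ⟪y, x⟫}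
      = ⇑f.symm ⁻¹' ConeE := by
    ext x
    simp only [hConeE, mem_preimage, mem_setOf_eq]
    have h1 : ⟪e₀, f.symm x⟫ = ⟪y, x⟫ := by
      calc ⟪e₀, f.symm x⟫ = ⟪f e₀, f (f.symm x)⟫ := (f.inner_map_map e₀ (f.symm x)).symm
        _ = ⟪y, x⟫ := by rw [hfe, f.apply_symm_apply]
    have h2 : ‖f.symm x‖ = ‖x‖ := f.symm.norm_map x
    rw [h1, h2]
  rw [hset, f.symm.measurePreserving.measure_preimage hmeasE.nullMeasurableSet]
  have hE1 := (EuclideanSpace.volume_preserving_symm_measurableEquiv_toLp (Fin (n+1))).symm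
  rw [MeasurableEquiv.symm_symm] at hE1
  rw [← hE1.measure_preimage hmeasE.nullMeasurableSet]
  have hmeasA : MeasurableSet (⇑(MeasurableEquiv.toLp 2 (Fin (n+1) → ℝ)) ⁻¹' ConeE) :=
    hmeasE.preimage (MeasurableEquiv.toLp 2 (Fin (n+1) → ℝ)).measurable
  have hE2 := (volume_preserving_piFinSuccAbove (fun _ : Fin (n+1) => ℝ) 0).symm
  rw [← hE2.measure_preimage hmeasA.nullMeasurableSet]
  set B : Set (ℝ × (Fin n → ℝ)) := {p | p.1 ∈ Ioo 0 s ∧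
      ‖(MeasurableEquiv.toLp 2 (Fin n → ℝ)) p.2‖ ≤ ρ/s*p.1} with hBdef
  have hBeq : ⇑(MeasurableEquiv.piFinSuccAbove (fun _ : Fin (n+1) => ℝ) 0).symm ⁻¹'
      (⇑(MeasurableEquiv.toLp 2 (Fin (n+1) → ℝ)) ⁻¹' ConeE) = B := by
    ext ⟨t, w⟩
    simp only [hBdef, hConeE, mem_preimage, mem_setOf_eq]
    have hE2app : (MeasurableEquiv.piFinSuccAbove (fun _ : Fin (n+1) => ℝ) 0).symm (t, w)
        = Fin.insertNth (α := fun _ => ℝ) 0 t w := rfl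
    rw [hE2app]
    have hinner : ⟪e₀, (MeasurableEquiv.toLp 2 (Fin (n+1) → ℝ))
        (Fin.insertNth (α := fun _ => ℝ) 0 t w)⟫ = t := by
      rw [he₀def, EuclideanSpace.inner_single_left]
      simp only [map_one, one_mul]
      show Fin.insertNth (α := fun _ => ℝ) 0 t w 0 = t
      simp
    rw [hinner, norm_insertNth]
    constructor
    · rintro ⟨ht, hle⟩
      exact ⟨ht, (sqrt_cond_iff hs0 ht.1 (norm_nonneg _) hρ0 hρs).mp hle⟩
    · rintro ⟨ht, hle⟩
      exact ⟨ht, (sqrt_cond_iff hs0 ht.1 (norm_nonneg _) hρ0 hρs).mpr hle⟩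
  rw [hBeq]
  have hmeasB : MeasurableSet B := by
    refine MeasurableSet.inter ?_ ?_
    · exact measurableSet_Ioo.preimage measurable_fst
    · exact measurableSet_le
        (((MeasurableEquiv.toLp 2 (Fin n → ℝ)).measurable.comp measurable_snd).norm)
        (measurable_const.mul measurable_fst)
  rw [show (volume : Measure (ℝ × (Fin n → ℝ))) = (volume : Measure ℝ).prod volume from rfl,
    Measure.prod_apply hmeasB]
  have hsec : ∀ t : ℝ, volume (Prod.mk t ⁻¹' B) =
      (Ioo (0:ℝ) s).indicator (fun t => ENNReal.ofReal ((ρ/s*t)^n * kap n)) t := by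
    intro t
    by_cases ht : t ∈ Ioo 0 s
    · rw [indicator_of_mem ht]
      have hpre : Prod.mk t ⁻¹' B = ⇑(MeasurableEquiv.toLp 2 (Fin n → ℝ)) ⁻¹'
          (closedBall 0 (ρ/s*t)) := by
        ext w
        simp [hBdef, mem_closedBall, dist_zero_right, ht.1, ht.2]
      have hEn := (EuclideanSpace.volume_preserving_symm_measurableEquiv_toLp (Fin n)).symm
      rw [MeasurableEquiv.symm_symm] at hEn
      have hR0 : (0:ℝ) ≤ ρ/s*t := mul_nonneg (div_nonneg hρ0 hs0.le) ht.1.le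
      rw [hpre, hEn.measure_preimage measurableSet_closedBall.nullMeasurableSet,
        volume_closedBall_euc n hn,
        ← ENNReal.ofReal_pow hR0, ← ENNReal.ofReal_mul (pow_nonneg hR0 n)]
    · rw [indicator_of_notMem ht]
      have hpre : Prod.mk t ⁻¹' B = ∅ := by
        ext w
        simp only [hBdef, mem_preimage, mem_setOf_eq, mem_empty_iff_false, iff_false, not_and]
        intro h; exact absurd h ht
      rw [hpre, measure_empty]
  rw [lintegral_congr hsec, lintegral_indicator measurableSet_Ioo]
  have hre : ∫⁻ t in Ioo (0:ℝ) s, ENNReal.ofReal ((ρ/s*t)^n * kap n)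
      = ENNReal.ofReal ((ρ/s)^n * kap n) * ∫⁻ t in Ioo (0:ℝ) s, ENNReal.ofReal (t^n) := by
    rw [← lintegral_const_mul _ (by measurability : Measurable fun t : ℝ => ENNReal.ofReal (t^n))]
    refine setLIntegral_congr_fun measurableSet_Ioo ?_
    intro t ht
    dsimp only
    rw [← ENNReal.ofReal_mul (mul_nonneg (pow_nonneg (div_nonneg hρ0 hs0.le) n) (kap_pos n).le)]
    congr 1
    rw [mul_pow]; ring
  rw [hre]
  have hJ : ∫⁻ t in Ioo (0:ℝ) s, ENNReal.ofReal (t^n) = ENNReal.ofReal (s^(n+1)/(n+1)) := by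
    rw [setLIntegral_congr Ioo_ae_eq_Ioc]
    have hint : IntegrableOn (fun t : ℝ => t ^ n) (Ioc 0 s) volume := by
      have h := intervalIntegral.intervalIntegrable_pow (μ := volume) (a := (0:ℝ)) (b := s) n
      rwa [intervalIntegrable_iff_integrableOn_Ioc_of_le hs0.le] at h
    have hnn : 0 ≤ᵐ[volume.restrict (Ioc (0:ℝ) s)] fun t : ℝ => t ^ n :=
      (ae_restrict_iff' measurableSet_Ioc).mpr
        (Filter.Eventually.of_forall fun t ht => pow_nonneg ht.1.le n)
    rw [← ofReal_integral_eq_lintegral_ofReal hint hnn]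
    congr 1
    rw [← intervalIntegral.integral_of_le hs0.le, integral_pow]
    simp
  rw [hJ, ← ENNReal.ofReal_mul (mul_nonneg (pow_nonneg (div_nonneg hρ0 hs0.le) n) (kap_pos n).le)]

lemma real_key (n : ℕ) (hn : 1 ≤ n) {ε : ℝ} (hε0 : 0 < ε) (hε1 : ε < 1) {s ρ : ℝ}
    (hs : s = 1 - (ε/2)^2/2) (hρ : ρ = Real.sqrt (1 - s^2)) :
    ε ^ n / (2 * ((n:ℝ)+1) * Real.sqrt 8 ^ n) ≤
      (((n:ℝ)+1) * kap (n+1))⁻¹ * (((n:ℝ)+1) * ((ρ/s)^n * kap n * (s^(n+1)/((n:ℝ)+1)))) := by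
  have hs78 : 7/8 ≤ s := by rw [hs]; nlinarith
  have hs0 : 0 < s := by linarith
  have hs1 : s ≤ 1 := by rw [hs]; nlinarith
  have hρ0 : 0 ≤ ρ := hρ ▸ Real.sqrt_nonneg _
  have hρlb : Real.sqrt 15 / 8 * ε ≤ ρ := by
    have h15 : Real.sqrt 15 ^ 2 = 15 := Real.sq_sqrt (by norm_num)
    have h1 : (Real.sqrt 15 / 8 * ε)^2 ≤ 1 - s^2 := by
      rw [mul_pow, div_pow, h15, hs]; nlinarith
    calc Real.sqrt 15 / 8 * ε = Real.sqrt ((Real.sqrt 15 / 8 * ε)^2) :=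
        (Real.sqrt_sq (by positivity)).symm
      _ ≤ Real.sqrt (1 - s^2) := Real.sqrt_le_sqrt h1
      _ = ρ := hρ.symm
  have hkapn := kap_pos n
  have hkapn1 := kap_pos (n+1)
  have hkap2 : kap (n+1) ≤ 2 * kap n := by
    have := kap_succ_le n hn
    nlinarith [sqrt_pi_le_two, Real.sqrt_nonneg π]
  have hbase : Real.sqrt 8 * (Real.sqrt 15 / 8) = Real.sqrt 120 / 8 := by
    rw [show Real.sqrt 8 * (Real.sqrt 15 / 8) = Real.sqrt 8 * Real.sqrt 15 / 8 by ring,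
      ← Real.sqrt_mul (by norm_num : (0:ℝ) ≤ 8) 15]
    norm_num
  have h120 : (8:ℝ)/7 ≤ Real.sqrt 120 / 8 := by
    have h1 : (64:ℝ)/7 ≤ Real.sqrt 120 := by
      have h2 := Real.sqrt_le_sqrt (show ((64:ℝ)/7)^2 ≤ 120 by norm_num)
      rwa [Real.sqrt_sq (by norm_num)] at h2
    linarith
  have hmain : ε^n ≤ ρ^n * s * Real.sqrt 8 ^ n := by
    have h1 : (Real.sqrt 15/8*ε)^n * Real.sqrt 8^n = (Real.sqrt 120/8)^n * ε^n := by
      rw [← mul_pow, ← mul_pow]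
      congr 1
      rw [show Real.sqrt 15/8*ε*Real.sqrt 8 = (Real.sqrt 8*(Real.sqrt 15/8))*ε by ring, hbase]
    have h2 : (8:ℝ)/7 ≤ (Real.sqrt 120/8)^n := by
      calc (8:ℝ)/7 ≤ Real.sqrt 120/8 := h120
        _ ≤ (Real.sqrt 120/8)^n := le_self_pow₀ (by linarith) (by omega)
    have h3 : (Real.sqrt 15/8*ε)^n ≤ ρ^n := pow_le_pow_left₀ (by positivity) hρlb n
    have h4 : ε^n ≤ 7/8 * ((Real.sqrt 120/8)^n * ε^n) := by
      nlinarith [pow_nonneg hε0.le n]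
    have h6 : (0:ℝ) ≤ Real.sqrt 8 ^ n := by positivity
    calc ε^n ≤ 7/8 * ((Real.sqrt 120/8)^n * ε^n) := h4
      _ = (Real.sqrt 15/8*ε)^n * Real.sqrt 8^n * (7/8) := by rw [h1]; ring
      _ ≤ ρ^n * s * Real.sqrt 8 ^ n := by
          nlinarith [mul_le_mul_of_nonneg_right h3 h6,
            mul_le_mul_of_nonneg_left hs78 (mul_nonneg (pow_nonneg hρ0 n) h6)]
  have hRHS : (((n:ℝ)+1) * kap (n+1))⁻¹ *
      (((n:ℝ)+1) * ((ρ/s)^n * kap n * (s^(n+1)/((n:ℝ)+1))))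
      = (ρ^n * s * kap n) / (((n:ℝ)+1) * kap (n+1)) := by
    have hn1 : ((n:ℝ)+1) ≠ 0 := by positivity
    rw [div_pow, pow_succ]
    field_simp
  rw [hRHS, div_le_div_iff₀ (by positivity) (mul_pos (by positivity) hkapn1)]
  have c1 : ε^n * (((n:ℝ)+1) * kap (n+1)) ≤ ε^n * (((n:ℝ)+1) * (2 * kap n)) := by
    apply mul_le_mul_of_nonneg_left _ (pow_nonneg hε0.le n)
    apply mul_le_mul_of_nonneg_left hkap2 (by positivity)
  have c3 : (2*((n:ℝ)+1)*kap n) * ε^n ≤ (2*((n:ℝ)+1)*kap n) * (ρ^n * s * Real.sqrt 8 ^ n) :=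
    mul_le_mul_of_nonneg_left hmain (mul_nonneg (by positivity) hkapn.le)
  calc ε^n * (((n:ℝ)+1) * kap (n+1)) ≤ ε^n * (((n:ℝ)+1) * (2 * kap n)) := c1
    _ = (2*((n:ℝ)+1)*kap n) * ε^n := by ring
    _ ≤ (2*((n:ℝ)+1)*kap n) * (ρ^n * s * Real.sqrt 8 ^ n) := c3
    _ = ρ^n * s * kap n * (2 * ((n:ℝ)+1) * Real.sqrt 8 ^ n) := by ring

lemma toSphere_univ_eq (d : ℕ) (hd : 1 ≤ d) :
    (volume : Measure (Euc d)).toSphere Set.univ = ENNReal.ofReal (d * kap d) := by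
  rw [Measure.toSphere_apply_univ, volume_ball_euc d hd, finrank_euclideanSpace_fin,
    ENNReal.ofReal_one, one_pow, one_mul, ← ENNReal.ofReal_natCast d,
    ← ENNReal.ofReal_mul (Nat.cast_nonneg d)]

end RandomNetAux

/-- The uniform (normalized rotation-invariant surface) probability measure on the unit
sphere `S^{d-1} ⊆ ℝ^d`. -/
def uniformSphere (d : ℕ) : Measure (sphere (0 : Euc d) 1) :=
  ((volume : Measure (Euc d)).toSphere Set.univ)⁻¹ • (volume : Measure (Euc d)).toSphere

namespace RandomNetAux

lemma uniformSphere_apply (d : ℕ) (hd : 1 ≤ d) (s : Set (sphere (0 : Euc d) 1)) :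
    uniformSphere d s = (ENNReal.ofReal (d * kap d))⁻¹ *
      (volume : Measure (Euc d)).toSphere s := by
  rw [uniformSphere, Measure.smul_apply, smul_eq_mul, toSphere_univ_eq d hd]

lemma dkap_pos (d : ℕ) (hd : 1 ≤ d) : 0 < (d : ℝ) * kap d :=
  mul_pos (by exact_mod_cast hd) (kap_pos d)

lemma isProb (d : ℕ) (hd : 1 ≤ d) : IsProbabilityMeasure (uniformSphere d) := by
  constructor
  rw [uniformSphere_apply d hd, toSphere_univ_eq d hd]
  exact ENNReal.inv_mul_cancel (ENNReal.ofReal_pos.mpr (dkap_pos d hd)).ne'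
    ENNReal.ofReal_ne_top

lemma cap_lb (d : ℕ) (hd : 1 ≤ d) {ε : ℝ} (hε0 : 0 < ε) (hε1 : ε < 1)
    {y : Euc d} (hy : ‖y‖ = 1) :
    ENNReal.ofReal (ε ^ ((d:ℝ)-1) / (2*(d:ℝ)*(8:ℝ) ^ (((d:ℝ)-1)/2))) ≤
      uniformSphere d {v : sphere (0:Euc d) 1 | ‖(v : Euc d) - y‖ ≤ ε/2} := by
  obtain ⟨n, rfl⟩ : ∃ n, d = n + 1 := ⟨d-1, by omega⟩
  have hys : y ∈ sphere (0 : Euc (n+1)) 1 := mem_sphere_zero_iff_norm.mpr hy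
  set capS := {v : sphere (0:Euc (n+1)) 1 | ‖(v : Euc (n+1)) - y‖ ≤ ε/2} with hcapS
  have hmeas : MeasurableSet capS := by
    have hcont : Continuous fun v : sphere (0:Euc (n+1)) 1 => ‖(v : Euc (n+1)) - y‖ :=
      (continuous_subtype_val.sub continuous_const).norm
    exact measurableSet_le hcont.measurable measurable_const
  have hfr : Module.finrank ℝ (Euc (n+1)) = n + 1 := finrank_euclideanSpace_fin
  have happly : uniformSphere (n+1) capS =
      (ENNReal.ofReal (((n:ℝ)+1) * kap (n+1)))⁻¹ *
        (ENNReal.ofReal ((n:ℝ)+1) * volume (Ioo (0:ℝ) 1 • (Subtype.val '' capS))) := by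
    rw [uniformSphere_apply (n+1) (by omega), Measure.toSphere_apply' _ hmeas, hfr]
    congr 2
    · push_cast; ring
    · rw [← ENNReal.ofReal_natCast (n+1)]
      congr 1
      push_cast; ring
  have hymem : (⟨y, hys⟩ : sphere (0:Euc (n+1)) 1) ∈ capS := by
    simp only [hcapS, mem_setOf_eq, sub_self, norm_zero]
    positivity
  rcases Nat.eq_zero_or_pos n with rfl | hn
  · -- d = 1
    have hkap1 : kap (0+1) = 2 := by
      unfold kap
      rw [show ((0+1:ℕ):ℝ)/2 + 1 = (1:ℝ)/2 + 1 by norm_num,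
        Real.Gamma_add_one (by norm_num), Real.Gamma_one_half_eq]
      have hπ : Real.sqrt π ≠ 0 := ne_of_gt (Real.sqrt_pos.mpr Real.pi_pos)
      rw [pow_one]
      field_simp
    have hy0 : y ≠ 0 := by intro h; rw [h, norm_zero] at hy; norm_num at hy
    have hball : ball ((1/2 : ℝ) • y) (1/2) ⊆ Ioo (0:ℝ) 1 • (Subtype.val '' capS) := by
      intro x hx
      obtain ⟨c, rfl⟩ : ∃ c : ℝ, c • y = x := by
        have h1 : Module.finrank ℝ (Euc (0+1)) = 1 := by rw [hfr]
        exact (finrank_eq_one_iff_of_nonzero' y hy0).mp h1 x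
      rw [mem_ball] at hx
      have hdst : dist (c • y) ((1/2:ℝ) • y) = |c - 1/2| := by
        rw [dist_eq_norm, ← sub_smul, norm_smul, hy, mul_one, Real.norm_eq_abs]
      rw [hdst, abs_lt] at hx
      have hc : c ∈ Ioo (0:ℝ) 1 := ⟨by linarith [hx.1], by linarith [hx.2]⟩
      exact Set.mem_smul.mpr ⟨c, hc, y, ⟨⟨y, hys⟩, hymem, rfl⟩, rfl⟩
    have hvol : ENNReal.ofReal 1 ≤ volume (Ioo (0:ℝ) 1 • (Subtype.val '' capS)) := by
      have h1 : volume (ball ((1/2:ℝ) • y) (1/2) : Set (Euc (0+1))) = ENNReal.ofReal 1 := by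
        rw [volume_ball_euc (0+1) (by omega), hkap1,
          ← ENNReal.ofReal_pow (by norm_num), ← ENNReal.ofReal_mul (by norm_num)]
        norm_num
      rw [← h1]
      exact measure_mono hball
    rw [happly]
    have hL : ε ^ (((0+1:ℕ):ℝ)-1) / (2*((0+1:ℕ):ℝ)*(8:ℝ) ^ ((((0+1:ℕ):ℝ)-1)/2))
        = 1/2 := by
      have e0 : ((0+1:ℕ):ℝ) - 1 = 0 := by norm_num
      rw [e0]
      norm_num
    rw [hL]
    calc ENNReal.ofReal (1/2)
        = (ENNReal.ofReal ((((0:ℕ):ℝ)+1) * kap (0+1)))⁻¹ *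
            (ENNReal.ofReal (((0:ℕ):ℝ)+1) * ENNReal.ofReal 1) := by
          rw [hkap1, one_div, ENNReal.ofReal_inv_of_pos (by norm_num)]
          norm_num
      _ ≤ (ENNReal.ofReal ((((0:ℕ):ℝ)+1) * kap (0+1)))⁻¹ *
            (ENNReal.ofReal (((0:ℕ):ℝ)+1) * volume (Ioo (0:ℝ) 1 • (Subtype.val '' capS))) :=
          mul_le_mul_right (mul_le_mul_right hvol _) _
  · -- d = n+1, n ≥ 1
    obtain ⟨s, hsdef⟩ : ∃ s : ℝ, s = 1 - (ε/2)^2/2 := ⟨_, rfl⟩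
    have hs78 : 7/8 ≤ s := by rw [hsdef]; nlinarith
    have hs0 : 0 < s := by linarith
    have hs1 : s ≤ 1 := by rw [hsdef]; nlinarith
    obtain ⟨ρ, hρdef⟩ : ∃ ρ : ℝ, ρ = Real.sqrt (1 - s^2) := ⟨_, rfl⟩
    have hcone := cone_volume n hn hs0 hs1 hy
    rw [← hρdef] at hcone
    have hsub : {x : Euc (n+1) | ⟪y, x⟫ ∈ Ioo 0 s ∧ s * ‖x‖ ≤ ⟪y, x⟫}
        ⊆ Ioo (0:ℝ) 1 • (Subtype.val '' capS) := by
      rintro x ⟨⟨ht0, hts⟩, hsx⟩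
      have hx0 : x ≠ 0 := by
        intro h
        rw [h, inner_zero_right] at ht0
        exact lt_irrefl 0 ht0
      have hxn : 0 < ‖x‖ := norm_pos_iff.mpr hx0
      have hx1 : ‖x‖ < 1 := by
        have h1 : s * ‖x‖ < s * 1 := by
          calc s * ‖x‖ ≤ ⟪y, x⟫ := hsx
            _ < s := hts
            _ = s * 1 := (mul_one s).symm
        exact lt_of_mul_lt_mul_left h1 hs0.le
      set u : Euc (n+1) := ‖x‖⁻¹ • x with hu
      have hun : ‖u‖ = 1 := by
        rw [hu, norm_smul, Real.norm_eq_abs, abs_inv, abs_norm, inv_mul_cancel₀ hxn.ne']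
      have hs_le : s ≤ ⟪y, u⟫ := by
        have hiu : ⟪y, u⟫ = ‖x‖⁻¹ * ⟪y, x⟫ := real_inner_smul_right y x ‖x‖⁻¹
        rw [hiu, le_inv_mul_iff₀ hxn, mul_comm]
        exact hsx
      have hcap : ‖u - y‖ ≤ ε/2 := by
        have hexp := norm_sub_sq_real u y
        rw [hun, hy] at hexp
        have hcomm : ⟪u, y⟫ = ⟪y, u⟫ := real_inner_comm y u
        rw [hcomm] at hexp
        have h2 : ‖u - y‖^2 ≤ (ε/2)^2 := by
          rw [hexp]
          have hsval : s = 1 - (ε/2)^2/2 := hsdef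
          nlinarith [hs_le]
        calc ‖u - y‖ = Real.sqrt (‖u - y‖^2) := (Real.sqrt_sq (norm_nonneg _)).symm
          _ ≤ Real.sqrt ((ε/2)^2) := Real.sqrt_le_sqrt h2
          _ = ε/2 := Real.sqrt_sq (by linarith)
      refine Set.mem_smul.mpr ⟨‖x‖, ⟨hxn, hx1⟩, u,
        ⟨⟨u, mem_sphere_zero_iff_norm.mpr hun⟩, hcap, rfl⟩, ?_⟩
      rw [hu, smul_smul, mul_inv_cancel₀ hxn.ne', one_smul]
    have hρ0 : (0:ℝ) ≤ ρ := hρdef ▸ Real.sqrt_nonneg _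
    obtain ⟨D, hD⟩ : ∃ D : ℝ, D = (ρ/s)^n * kap n * (s^(n+1)/((n:ℝ)+1)) := ⟨_, rfl⟩
    have hD0 : (0:ℝ) ≤ D := by
      rw [hD]
      exact mul_nonneg (mul_nonneg (pow_nonneg (div_nonneg hρ0 hs0.le) n) (kap_pos n).le)
        (div_nonneg (pow_nonneg hs0.le _) (by positivity))
    have hvol : ENNReal.ofReal D ≤ volume (Ioo (0:ℝ) 1 • (Subtype.val '' capS)) := by
      rw [hD, ← hcone]
      exact measure_mono hsub
    rw [happly]
    have hq : ε ^ (((n+1:ℕ):ℝ)-1) / (2*((n+1:ℕ):ℝ)*(8:ℝ) ^ ((((n+1:ℕ):ℝ)-1)/2))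
        = ε ^ n / (2 * ((n:ℝ)+1) * Real.sqrt 8 ^ n) := by
      have he1 : ((n+1:ℕ):ℝ) - 1 = (n:ℝ) := by push_cast; ring
      have he3 : (8:ℝ) ^ ((n:ℝ)/2) = Real.sqrt 8 ^ n := by
        rw [show (n:ℝ)/2 = (1/2:ℝ)*((n:ℕ):ℝ) by push_cast; ring,
          Real.rpow_mul (by norm_num : (0:ℝ) ≤ 8), Real.rpow_natCast]
        congr 1
        rw [Real.sqrt_eq_rpow]
      rw [he1, Real.rpow_natCast ε n, he3]
      congr 2
      push_cast; ring
    rw [hq]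
    have hrk := real_key n hn hε0 hε1 hsdef hρdef
    have hapos : (0:ℝ) < ((n:ℝ)+1) * kap (n+1) := mul_pos (by positivity) (kap_pos (n+1))
    calc ENNReal.ofReal (ε ^ n / (2 * ((n:ℝ)+1) * Real.sqrt 8 ^ n))
        ≤ ENNReal.ofReal ((((n:ℝ)+1) * kap (n+1))⁻¹ * (((n:ℝ)+1) * D)) := by
          refine ENNReal.ofReal_le_ofReal ?_
          calc ε ^ n / (2 * ((n:ℝ)+1) * Real.sqrt 8 ^ n)
              ≤ (((n:ℝ)+1) * kap (n+1))⁻¹ *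
                  (((n:ℝ)+1) * ((ρ/s)^n * kap n * (s^(n+1)/((n:ℝ)+1)))) := hrk
            _ = (((n:ℝ)+1) * kap (n+1))⁻¹ * (((n:ℝ)+1) * D) := by rw [hD]
      _ = (ENNReal.ofReal (((n:ℝ)+1) * kap (n+1)))⁻¹ *
            (ENNReal.ofReal ((n:ℝ)+1) * ENNReal.ofReal D) := by
          rw [ENNReal.ofReal_mul (inv_nonneg.mpr hapos.le),
            ENNReal.ofReal_inv_of_pos hapos,
            ENNReal.ofReal_mul (by positivity : (0:ℝ) ≤ (n:ℝ)+1),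
            ENNReal.ofReal_mul (by positivity : (0:ℝ) ≤ (n:ℝ)+1)]
      _ ≤ (ENNReal.ofReal (((n:ℝ)+1) * kap (n+1)))⁻¹ *
            (ENNReal.ofReal ((n:ℝ)+1) * volume (Ioo (0:ℝ) 1 • (Subtype.val '' capS))) :=
          mul_le_mul_right (mul_le_mul_right hvol _) _

end RandomNetAux

open RandomNetAux

/-- `M` i.i.d. uniform points on the sphere form an `ε`-net of `S^{d-1}` with probability at
least `1 − 6^d·exp(−M·ε^{d-1}/(2d·8^{(d-1)/2}) + d·ln(1/ε))`. -/
theorem random_net_of_sphere (d : ℕ) (hd : 1 ≤ d) (M : ℕ) (hM : 1 ≤ M)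
    (ε : ℝ) (hε0 : 0 < ε) (hε1 : ε < 1) :
    ENNReal.ofReal
        (1 - 6 ^ d * Real.exp
          (-((M : ℝ) * ε ^ ((d : ℝ) - 1)) / (2 * d * (8 : ℝ) ^ (((d : ℝ) - 1) / 2)) +
            d * Real.log (1 / ε))) ≤
      Measure.pi (fun _ : Fin M => uniformSphere d)
        {ω | ∀ u ∈ sphere (0 : Euc d) 1, ∃ i : Fin M, ‖u - (ω i : Euc d)‖ ≤ ε} := by
  classical
  haveI : IsProbabilityMeasure (uniformSphere d) := isProb d hd
  set μ := Measure.pi (fun _ : Fin M => uniformSphere d) with hμ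
  haveI : IsProbabilityMeasure μ := by rw [hμ]; infer_instance
  set E := {ω : Fin M → sphere (0:Euc d) 1 |
    ∀ u ∈ sphere (0 : Euc d) 1, ∃ i : Fin M, ‖u - (ω i : Euc d)‖ ≤ ε} with hE
  set T : ℝ := -((M : ℝ) * ε ^ ((d : ℝ) - 1)) / (2 * d * (8 : ℝ) ^ (((d : ℝ) - 1) / 2)) +
      d * Real.log (1 / ε) with hT
  set q : ℝ := ε ^ ((d:ℝ)-1) / (2*(d:ℝ)*(8:ℝ) ^ (((d:ℝ)-1)/2)) with hq
  have hd1 : (1:ℝ) ≤ (d:ℝ) := by exact_mod_cast hd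
  have hq0 : 0 < q := by
    rw [hq]
    have h1 : 0 < ε ^ ((d:ℝ)-1) := Real.rpow_pos_of_pos hε0 _
    have h2 : 0 < (8:ℝ) ^ (((d:ℝ)-1)/2) := Real.rpow_pos_of_pos (by norm_num) _
    have h3 : (0:ℝ) < d := by linarith
    positivity
  have hqhalf : q ≤ 1/2 := by
    rw [hq]
    have h1 : ε ^ ((d:ℝ)-1) ≤ 1 := Real.rpow_le_one hε0.le hε1.le (by linarith)
    have h2 : (1:ℝ) ≤ (8:ℝ) ^ (((d:ℝ)-1)/2) := by
      have h3 := Real.rpow_le_rpow_of_exponent_le (by norm_num : (1:ℝ) ≤ 8)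
        (show (0:ℝ) ≤ ((d:ℝ)-1)/2 by linarith)
      rwa [Real.rpow_zero] at h3
    have h4 : (2:ℝ) ≤ 2*(d:ℝ)*(8:ℝ)^(((d:ℝ)-1)/2) := by nlinarith
    exact div_le_div₀ (by norm_num) h1 (by norm_num) h4
  obtain ⟨S, hSsub, hSnet, hScard⟩ := exists_net d hd hε0 hε1
  set C : Euc d → Set (sphere (0:Euc d) 1) := fun y => {v | ‖(v : Euc d) - y‖ ≤ ε/2} with hC
  have hCmeas : ∀ y, MeasurableSet (C y) := by
    intro y
    have hcont : Continuous fun v : sphere (0:Euc d) 1 => ‖(v : Euc d) - y‖ :=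
      (continuous_subtype_val.sub continuous_const).norm
    exact measurableSet_le hcont.measurable measurable_const
  have hcapge : ∀ y ∈ S, ENNReal.ofReal q ≤ uniformSphere d (C y) := by
    intro y hyS
    rw [hq]
    exact cap_lb d hd hε0 hε1 (mem_sphere_zero_iff_norm.mp (hSsub hyS))
  have hsubE : Eᶜ ⊆ ⋃ y ∈ S, Set.pi Set.univ (fun _ : Fin M => (C y)ᶜ) := by
    intro ω hω
    have hω' : ¬ ∀ u ∈ sphere (0:Euc d) 1, ∃ i : Fin M, ‖u - (ω i : Euc d)‖ ≤ ε := hω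
    push_neg at hω'
    obtain ⟨u, hu, hui⟩ := hω'
    obtain ⟨y, hyS, hyd⟩ := hSnet u hu
    refine mem_biUnion hyS ?_
    intro i _
    simp only [hC, mem_compl_iff, mem_setOf_eq, not_le]
    by_contra hle
    push_neg at hle
    have h1 : ‖u - (ω i : Euc d)‖ ≤ ε := by
      calc ‖u - (ω i : Euc d)‖ = ‖(u - y) + (y - (ω i : Euc d))‖ := by
            congr 1; abel
        _ ≤ ‖u - y‖ + ‖y - (ω i : Euc d)‖ := norm_add_le _ _
        _ ≤ ε/2 + ε/2 := add_le_add (by rwa [← dist_eq_norm]) (by rwa [norm_sub_rev])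
        _ = ε := by ring
    exact absurd h1 (not_le.mpr (hui i))
  have hbad : ∀ y ∈ S, μ (Set.pi Set.univ (fun _ : Fin M => (C y)ᶜ)) ≤
      ENNReal.ofReal ((1-q)^M) := by
    intro y hyS
    rw [hμ, Measure.pi_pi]
    calc ∏ _i : Fin M, uniformSphere d ((C y)ᶜ) = (uniformSphere d ((C y)ᶜ))^M := by
          rw [Finset.prod_const, Finset.card_univ, Fintype.card_fin]
      _ ≤ (ENNReal.ofReal (1-q))^M := by
          apply pow_le_pow_left' _ M
          rw [prob_compl_eq_one_sub (hCmeas y)]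
          calc 1 - uniformSphere d (C y) ≤ 1 - ENNReal.ofReal q :=
                tsub_le_tsub_left (hcapge y hyS) 1
            _ = ENNReal.ofReal (1-q) := by
                rw [ENNReal.ofReal_sub _ hq0.le, ENNReal.ofReal_one]
      _ = ENNReal.ofReal ((1-q)^M) := (ENNReal.ofReal_pow (by linarith) M).symm
  have hEc : μ Eᶜ ≤ ENNReal.ofReal ((6/ε)^d * (1-q)^M) := by
    calc μ Eᶜ ≤ μ (⋃ y ∈ S, Set.pi Set.univ (fun _ : Fin M => (C y)ᶜ)) := measure_mono hsubE
      _ ≤ ∑ y ∈ S, μ (Set.pi Set.univ (fun _ : Fin M => (C y)ᶜ)) :=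
          measure_biUnion_finset_le S _
      _ ≤ ∑ _y ∈ S, ENNReal.ofReal ((1-q)^M) := Finset.sum_le_sum hbad
      _ = (S.card : ℝ≥0∞) * ENNReal.ofReal ((1-q)^M) := by
          rw [Finset.sum_const, nsmul_eq_mul]
      _ ≤ ENNReal.ofReal ((6/ε)^d * (1-q)^M) := by
          rw [← ENNReal.ofReal_natCast S.card, ← ENNReal.ofReal_mul (by positivity)]
          apply ENNReal.ofReal_le_ofReal
          exact mul_le_mul_of_nonneg_right hScard (pow_nonneg (by linarith) M)
  have hkey : (6/ε)^d * (1-q)^M ≤ 6^d * Real.exp T := by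
    have h1 : (1-q)^M ≤ Real.exp (-q) ^ M :=
      pow_le_pow_left₀ (by linarith) (by nlinarith [Real.add_one_le_exp (-q)]) M
    have h2 : Real.exp (-q) ^ M = Real.exp (-(q*(M:ℝ))) := by
      rw [← Real.exp_nat_mul]; congr 1; ring
    have h3 : -((M : ℝ) * ε ^ ((d:ℝ)-1)) / (2*(d:ℝ)*(8:ℝ)^(((d:ℝ)-1)/2)) = -(q*(M:ℝ)) := by
      rw [hq]; ring
    have h4 : Real.exp ((d:ℝ) * Real.log (1/ε)) = (1/ε)^d := by
      rw [show ((d:ℝ) * Real.log (1/ε)) = ((d:ℕ):ℝ) * Real.log (1/ε) from rfl,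
        Real.exp_nat_mul, Real.exp_log (by positivity)]
    calc (6/ε)^d * (1-q)^M ≤ (6/ε)^d * Real.exp (-(q*(M:ℝ))) :=
          mul_le_mul_of_nonneg_left (h1.trans_eq h2) (by positivity)
      _ = 6^d * Real.exp (-(q*(M:ℝ)) + d*Real.log (1/ε)) := by
          rw [Real.exp_add, h4, div_pow, one_div, inv_pow]
          ring
      _ = 6^d * Real.exp T := by rw [hT, h3]
  have hb0 : (0:ℝ) ≤ 6^d * Real.exp T := by positivity
  have hEc2 : μ Eᶜ ≤ ENNReal.ofReal (6^d * Real.exp T) :=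
    hEc.trans (ENNReal.ofReal_le_ofReal hkey)
  have huniv : (1:ℝ≥0∞) ≤ μ E + μ Eᶜ := by
    calc (1:ℝ≥0∞) = μ Set.univ := (measure_univ (μ := μ)).symm
      _ = μ (E ∪ Eᶜ) := by rw [union_compl_self]
      _ ≤ μ E + μ Eᶜ := measure_union_le E Eᶜ
  calc ENNReal.ofReal (1 - 6^d * Real.exp T)
      = 1 - ENNReal.ofReal (6^d * Real.exp T) := by
        rw [ENNReal.ofReal_sub _ hb0, ENNReal.ofReal_one]
    _ ≤ 1 - μ Eᶜ := tsub_le_tsub_left hEc2 1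
    _ ≤ μ E := tsub_le_iff_right.mpr huniv
end
end
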